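/- arXiv:2401.05899 — 4 statements merged into one kernel-verified Lean document; each statement's English description precedes it below -/
import Mathlib

section
/- Let u : S×A → ℝ satisfy u(s,a) ≥ |𝔼_{s'∼T̂(s,a)}[V_M(s')] − 𝔼_{s'∼T(s,a)}[V_M(s')]| for all (s,a). Then for any policy π, the expected return in the real MDP satisfies η_M(π) ≥ 𝔼_{(s,a)∼ρ^π_{T̂}}[r(s,a) − γ·c·u(s,a)] = η_{M̂}(π) − λ^p·ε_u(π), where λ^p = γc and ε_u(π) = 𝔼_{(s,a)∼ρ^π_{T̂}}[u(s,a)]. -/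
/-- MOPO lower bound: if u(s,a) ≥ |G(s,a)| pointwise, where G is the
model error in values, and the telescoping identity η_M(π) = E_{ρ}[r − γ G] holds
(with ρ the discounted occupancy of π under the learned dynamics, here a nonnegative
weight function), then η_M(π) ≥ E_ρ[r − γ·c·u] = η_{M̂}(π) − λᵖ·ε_u(π) with λᵖ = γ·c
(and c = 1 from the telescoping lemma). -/
theorem stmt_4 {S A : Type*} [Fintype S] [Fintype A]
    (ρ : S × A → ℝ) (hρ : ∀ p, 0 ≤ ρ p)
    (r u G : S × A → ℝ) (γ c : ℝ) (hγ : 0 < γ) (hγ1 : γ < 1) (hc : c = 1)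
    (hu : ∀ p, u p ≥ |G p|)
    (ηM ηMhat εu lamP : ℝ)
    (htel : ηM = ∑ p : S × A, ρ p * (r p - γ * G p))
    (hηMhat : ηMhat = ∑ p : S × A, ρ p * r p)
    (hεu : εu = ∑ p : S × A, ρ p * u p)
    (hlamP : lamP = γ * c) :
    ηM ≥ ∑ p : S × A, ρ p * (r p - γ * c * u p) ∧
    (∑ p : S × A, ρ p * (r p - γ * c * u p)) = ηMhat - lamP * εu := by
  subst hc htel hηMhat hεu hlamP
  constructor
  · apply Finset.sum_le_sum
    intro p _
    have h2 : r p - γ * 1 * u p ≤ r p - γ * G p := by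
      have h3 := le_abs_self (G p)
      have h4 := hu p
      nlinarith
    exact mul_le_mul_of_nonneg_left h2 (hρ p)
  · simp [mul_sub, Finset.sum_sub_distrib, Finset.mul_sum, mul_comm, mul_left_comm]
end

section
/- Under the assumptions of the pessimistic lower bound, for any policy π one has the two-sided bound |η_{M̂}(π) − η_M(π)| ≤ λ^p · ε_u(π), where ε_u(π) = 𝔼_{(s,a)∼ρ^π_{T̂}}[u(s,a)] and u upper-bounds the model error |G^π_{M̂}(s,a)| pointwise. -/
/-- two-sided bound: under the MOPO assumptions, with λᵖ = γ (c = 1),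
for any policy |η_{M̂}(π) − η_M(π)| ≤ λᵖ · ε_u(π), where ε_u(π) = E_{ρ}[u] and
u upper-bounds the pointwise model error |G|. Here ρ is the (nonnegative)
discounted occupancy under the model, η_{M̂} = E_ρ[r], and
η_M = E_ρ[r − γ G] by the telescoping identity. -/
theorem stmt_5 {S A : Type*} [Fintype S] [Fintype A]
    (ρ : S × A → ℝ) (hρ : ∀ p, 0 ≤ ρ p)
    (r u G : S × A → ℝ) (γ : ℝ) (hγ : 0 < γ) (hγ1 : γ < 1)
    (hu : ∀ p, |G p| ≤ u p)
    (ηM ηMhat εu lamP : ℝ)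
    (htel : ηM = ∑ p : S × A, ρ p * (r p - γ * G p))
    (hηMhat : ηMhat = ∑ p : S × A, ρ p * r p)
    (hεu : εu = ∑ p : S × A, ρ p * u p)
    (hlam : lamP = γ) :
    |ηMhat - ηM| ≤ lamP * εu := by
  rw [hlam]; subst htel hηMhat hεu
  rw [← Finset.sum_sub_distrib, Finset.mul_sum]
  refine (Finset.abs_sum_le_sum_abs _ _).trans (Finset.sum_le_sum fun p _ => ?_)
  have : ρ p * r p - ρ p * (r p - γ * G p) = γ * (ρ p * G p) := by ring
  rw [this, abs_mul, abs_of_pos hγ, abs_mul, abs_of_nonneg (hρ p)]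
  have := hu p
  nlinarith [hρ p, abs_nonneg (G p), mul_le_mul_of_nonneg_left this (hρ p)]
end

section
/- Suppose for every policy π we have (i) η_M(π) ≥ η_{M^p}(π) and (ii) |η_{M̂}(π) − η_M(π)| ≤ λ·ε_u(π), where η_{M^p}(π) = η_{M̂}(π) − λ·ε_u(π). If π^p is ε-optimal in the P-MDP, i.e. η_{M^p}(π^p) ≥ sup_π η_{M^p}(π) − ε, then η_M(π^p) ≥ sup_π { η_M(π) − 2λ·ε_u(π) } − ε. -/
/-- if η_M ≥ η_{Mᵖ} pointwise, |η_{M̂} − η_M| ≤ λ·ε_u pointwise,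
where η_{Mᵖ} = η_{M̂} − λ·ε_u, and πᵖ is ε-optimal in the P-MDP, then
η_M(πᵖ) ≥ sup_π { η_M(π) − 2λ·ε_u(π) } − ε. -/
theorem stmt_6 {Policy : Type*} [Nonempty Policy]
    (ηM ηMhat εu ηMp : Policy → ℝ) (lam eps : ℝ)
    (hlam : 0 ≤ lam) (heps : 0 ≤ eps) (hεu : ∀ π, 0 ≤ εu π)
    (hMp : ∀ π, ηMp π = ηMhat π - lam * εu π)
    (h1 : ∀ π, ηM π ≥ ηMp π)
    (h2 : ∀ π, |ηMhat π - ηM π| ≤ lam * εu π)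
    (hbdd1 : BddAbove (Set.range ηMp))
    (hbdd2 : BddAbove (Set.range fun π => ηM π - 2 * lam * εu π))
    (πp : Policy)
    (hopt : ηMp πp ≥ sSup (Set.range ηMp) - eps) :
    ηM πp ≥ sSup (Set.range fun π => ηM π - 2 * lam * εu π) - eps := by
  have key : sSup (Set.range fun π => ηM π - 2 * lam * εu π) ≤ sSup (Set.range ηMp) := by
    apply csSup_le (Set.range_nonempty _)
    rintro x ⟨π, rfl⟩
    have h2' := abs_le.mp (h2 π)
    have : ηM π - 2 * lam * εu π ≤ ηMp π := by
      rw [hMp π]; linarith [h2'.1]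
    exact this.trans (le_csSup hbdd1 ⟨π, rfl⟩)
  linarith [h1 πp]
end

section
/- If an uncertainty quantifier Γ satisfies |T̂V(s,a) − TV(s,a)| ≤ Γ(s,a) for all (s,a) (a ξ-uncertainty-quantifier event), and a policy π is evaluated with penalized Bellman backups r − Γ, then the resulting pessimistic value estimate V̂^π lower-bounds the true value: V̂^π(s) ≤ V^π(s) for all s, where V̂^π is defined by the Bellman recursion V̂^π_h(s) = r(s,π(s)) − Γ(s,π(s)) + 𝔼_{s'∼T̂(s,π(s))}[V̂^π_{h+1}(s')] with V̂^π_{H+1} = V^π_{H+1} = 0. -/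
/-- if Γ is a valid uncertainty quantifier, i.e.
|T̂V^π_{h+1}(s,a) − TV^π_{h+1}(s,a)| ≤ Γ(s,a) at every step, and the pessimistic
value V̂^π is computed by Bellman backups with penalized reward r − Γ under the
model dynamics T̂, then V̂^π_h(s) ≤ V^π_h(s) for all h and s (backward induction),
where V^π is the true value under T and V^π_{H+1} = V̂^π_{H+1} = 0. -/
theorem stmt_16 {S A : Type*} [Fintype S] (H : ℕ)
    (r : S → A → ℝ) (π : S → A)
    (T That : S → A → S → ℝ)
    (hT0 : ∀ s a s', 0 ≤ T s a s') (hT1 : ∀ s a, ∑ s' : S, T s a s' = 1)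
    (hThat0 : ∀ s a s', 0 ≤ That s a s') (hThat1 : ∀ s a, ∑ s' : S, That s a s' = 1)
    (Γ : S → A → ℝ) (hΓ0 : ∀ s a, 0 ≤ Γ s a)
    (V Vhat : ℕ → S → ℝ)
    (hVend : ∀ s, V (H + 1) s = 0) (hVhatend : ∀ s, Vhat (H + 1) s = 0)
    (hVrec : ∀ h, 1 ≤ h → h ≤ H → ∀ s,
      V h s = r s (π s) + ∑ s' : S, T s (π s) s' * V (h + 1) s')
    (hVhatrec : ∀ h, 1 ≤ h → h ≤ H → ∀ s,
      Vhat h s = r s (π s) - Γ s (π s) + ∑ s' : S, That s (π s) s' * Vhat (h + 1) s')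
    (hΓ : ∀ h, 1 ≤ h → h ≤ H → ∀ s a,
      |(∑ s' : S, That s a s' * V (h + 1) s') - ∑ s' : S, T s a s' * V (h + 1) s'|
        ≤ Γ s a) :
    ∀ h, 1 ≤ h → h ≤ H + 1 → ∀ s, Vhat h s ≤ V h s := by
  have key : ∀ k h, 1 ≤ h → h ≤ H + 1 → H + 1 - h ≤ k → ∀ s, Vhat h s ≤ V h s := by
    intro k
    induction k with
    | zero =>
      intro h h1 hH hk s
      have : h = H + 1 := by omega
      subst this
      rw [hVend, hVhatend]
    | succ k ih =>
      intro h h1 hH hk s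
      rcases eq_or_lt_of_le hH with heq | hlt
      · subst heq; rw [hVend, hVhatend]
      · have hle : h ≤ H := by omega
        rw [hVrec h h1 hle, hVhatrec h h1 hle]
        have ih' : ∀ s', Vhat (h + 1) s' ≤ V (h + 1) s' :=
          ih (h + 1) (by omega) (by omega) (by omega)
        have h2 : ∑ s' : S, That s (π s) s' * Vhat (h + 1) s'
            ≤ ∑ s' : S, That s (π s) s' * V (h + 1) s' := by
          apply Finset.sum_le_sum
          intro s' _
          exact mul_le_mul_of_nonneg_left (ih' s') (hThat0 s (π s) s')
        have h3 : ∑ s' : S, That s (π s) s' * V (h + 1) s'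
            ≤ (∑ s' : S, T s (π s) s' * V (h + 1) s') + Γ s (π s) := by
          have := (abs_le.mp (hΓ h h1 hle s (π s))).2
          linarith
        linarith
  exact fun h h1 hH s => key (H + 1 - h) h h1 hH le_rfl s
end
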